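/- (Embeddability of direct limits.) Let E be a complete Boolean algebra, K a directed partial order, and (A_k : k ∈ K), (E_k : k ∈ K) complete subalgebras of E such that A_k ⊆ E_k for all k, A_k ⊆ A_l and E_k ⊆ E_l for k ≤ l, and ⋃_{k∈K} E_k is dense in E (for every nonzero e ∈ E there are k ∈ K and nonzero e' ∈ E_k with e' ≤ e), i.e., E is the direct limit of the E_k. Assume correctness of all diagrams (A_k; A_l, E_k; E_l): for all k ≤ l in K and all a ∈ A_l, sInf {e ∈ E_k : a ≤ e} = sInf {b ∈ A_k : a ≤ b}. Let A be the smallest complete subalgebra of E containing ⋃_{k∈K} A_k. Then: (a) ⋃_{k∈K} A_k is dense in A (for every nonzero a ∈ A there are k ∈ K and nonzero b ∈ A_k with b ≤ a), so that A is the direct limit of the A_k and is completely embedded in E; and (b) correctness is preserved: for every k ∈ K and every a ∈ A, sInf {e ∈ E_k : a ≤ e} = sInf {b ∈ A_k : a ≤ b}. -/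

import Mathlib

/-!
Let `D = ⋃ k, A_k` and call `a` a join of `D` if `a = ⨆ {d ∈ D | d ≤ a}`. Projections onto a
complete subalgebra commute with joins, so correctness, which holds on `D` by directedness,
extends to all joins of `D`. The joins of `D` form a complete subalgebra: for the complement of
such an `a`, a nonzero `e ∈ E_k` below the part of `aᶜ` not covered by `D` would lie below
`h_{A_k}(a) = h_{E_k}(a) ≤ eᶜ`. Hence `A` consists of joins of `D`, which gives density.
-/

/-- A complete subalgebra of a complete Boolean algebra: a subset containing `⊥`,
closed under complementation and under suprema of arbitrary subsets. -/
structure CompleteSubalgebra {E : Type*} [CompleteBooleanAlgebra E] (S : Set E) : Prop where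
  bot_mem : ⊥ ∈ S
  compl_mem : ∀ a ∈ S, aᶜ ∈ S
  sSup_mem : ∀ T ⊆ S, sSup T ∈ S

section

variable {E : Type*} [CompleteBooleanAlgebra E]

theorem CompleteSubalgebra.sInf_mem {S : Set E} (hS : CompleteSubalgebra S) {T : Set E}
    (hT : T ⊆ S) : sInf T ∈ S := by
  rw [← compl_compl (sInf T), compl_sInf']
  refine hS.compl_mem _ (hS.sSup_mem _ ?_)
  rintro _ ⟨t, ht, rfl⟩
  exact hS.compl_mem t (hT ht)

section Projection

def proj (S : Set E) (a : E) : E := sInf {s | s ∈ S ∧ a ≤ s}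

variable {S : Set E}

theorem proj_mem (hS : CompleteSubalgebra S) (a : E) : proj S a ∈ S :=
  hS.sInf_mem fun _ hs => hs.1

theorem le_proj (S : Set E) (a : E) : a ≤ proj S a :=
  le_sInf fun _ hs => hs.2

theorem proj_le {a s : E} (hs : s ∈ S) (has : a ≤ s) : proj S a ≤ s :=
  sInf_le ⟨hs, has⟩

theorem proj_sSup (hS : CompleteSubalgebra S) (T : Set E) :
    proj S (sSup T) = ⨆ t ∈ T, proj S t := by
  refine le_antisymm (proj_le ?_ ?_) (iSup₂_le fun t ht => ?_)
  · rw [← sSup_image]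
    exact hS.sSup_mem _ (Set.image_subset_iff.2 fun t _ => proj_mem hS t)
  · exact sSup_le fun t ht => (le_proj S t).trans (le_iSup₂ (f := fun t _ => proj S t) t ht)
  · exact proj_le (proj_mem hS _) ((le_sSup ht).trans (le_proj S _))

end Projection

section Joins

variable {D : Set E}

def joinsOf (D : Set E) : Set E := {a | sSup {d | d ∈ D ∧ d ≤ a} = a}

theorem subset_joinsOf : D ⊆ joinsOf D := fun _ hd =>
  le_antisymm (sSup_le fun _ h => h.2) (le_sSup ⟨hd, le_rfl⟩)

theorem bot_mem_joinsOf : ⊥ ∈ joinsOf D :=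
  le_bot_iff.1 (sSup_le fun _ h => h.2)

theorem sSup_mem_joinsOf {T : Set E} (hT : T ⊆ joinsOf D) : sSup T ∈ joinsOf D := by
  refine le_antisymm (sSup_le fun _ h => h.2) (sSup_le fun t ht => ?_)
  rw [← hT ht]
  exact sSup_le_sSup fun d hd => ⟨hd.1, hd.2.trans (le_sSup ht)⟩

theorem exists_ne_bot_le_of_mem_joinsOf {a : E} (ha : a ∈ joinsOf D) (hne : a ≠ ⊥) :
    ∃ d ∈ D, d ≠ ⊥ ∧ d ≤ a := by
  by_contra! h
  refine hne (ha.symm.trans (sSup_eq_bot.2 fun d hd => ?_))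
  by_contra hd'
  exact h d hd.1 hd' hd.2

theorem proj_eq_of_mem_joinsOf {S S' : Set E} (hS : CompleteSubalgebra S)
    (hS' : CompleteSubalgebra S') (hD : ∀ d ∈ D, proj S d = proj S' d) {a : E}
    (ha : a ∈ joinsOf D) : proj S a = proj S' a := by
  rw [← ha, proj_sSup hS, proj_sSup hS']
  exact iSup_congr fun d => iSup_congr fun hd => hD d hd.1

theorem compl_mem_joinsOf {ι : Type*} {S T : ι → Set E} (hS : ∀ i, CompleteSubalgebra (S i))
    (hT : ∀ i, CompleteSubalgebra (T i)) (hTD : ∀ i, T i ⊆ D)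
    (hdense : ∀ z : E, z ≠ ⊥ → ∃ i, ∃ e ∈ S i, e ≠ ⊥ ∧ e ≤ z)
    (hD : ∀ i, ∀ d ∈ D, proj (S i) d = proj (T i) d) {a : E} (ha : a ∈ joinsOf D) :
    aᶜ ∈ joinsOf D := by
  set U := {d | d ∈ D ∧ d ≤ aᶜ}
  refine le_antisymm (sSup_le fun _ h => h.2) ?_
  by_contra hU
  obtain ⟨i, e, heS, hne, hle⟩ := hdense (aᶜ \ sSup U) (sdiff_eq_bot_iff.not.2 hU)
  set q := proj (T i) a
  have hqU : qᶜ ∈ U :=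
    ⟨hTD i ((hT i).compl_mem q (proj_mem (hT i) a)), compl_le_compl (le_proj _ a)⟩
  have heq : e ≤ q :=
    calc e ≤ (sSup U)ᶜ := (hle.trans_eq sdiff_eq).trans inf_le_right
      _ ≤ q := compl_le_iff_compl_le.1 (le_sSup hqU)
  have hqe : q ≤ eᶜ :=
    calc q = proj (S i) a := (proj_eq_of_mem_joinsOf (hS i) (hT i) (hD i) ha).symm
      _ ≤ eᶜ := proj_le ((hS i).compl_mem e heS) (le_compl_comm.1 (hle.trans sdiff_le))
  exact hne (le_compl_self.1 (heq.trans hqe))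

theorem completeSubalgebra_joinsOf {ι : Type*} {S T : ι → Set E}
    (hS : ∀ i, CompleteSubalgebra (S i)) (hT : ∀ i, CompleteSubalgebra (T i))
    (hTD : ∀ i, T i ⊆ D) (hdense : ∀ z : E, z ≠ ⊥ → ∃ i, ∃ e ∈ S i, e ≠ ⊥ ∧ e ≤ z)
    (hD : ∀ i, ∀ d ∈ D, proj (S i) d = proj (T i) d) : CompleteSubalgebra (joinsOf D) :=
  ⟨bot_mem_joinsOf, fun _ => compl_mem_joinsOf hS hT hTD hdense hD,
    fun _ => sSup_mem_joinsOf⟩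

end Joins

end

theorem direct_limit_embeds_general {E : Type*} [CompleteBooleanAlgebra E]
    {K : Type*} [PartialOrder K]
    (hdir : ∀ k l : K, ∃ m : K, k ≤ m ∧ l ≤ m)
    (Asub Esub : K → Set E)
    (hA : ∀ k, CompleteSubalgebra (Asub k)) (hE : ∀ k, CompleteSubalgebra (Esub k))
    (hAmono : ∀ k l : K, k ≤ l → Asub k ⊆ Asub l)
    (hEdense : ∀ e : E, e ≠ ⊥ → ∃ k : K, ∃ e' ∈ Esub k, e' ≠ ⊥ ∧ e' ≤ e)
    (hcorrect : ∀ k l : K, k ≤ l → ∀ a ∈ Asub l,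
      sInf {e | e ∈ Esub k ∧ a ≤ e} = sInf {b | b ∈ Asub k ∧ a ≤ b})
    -- `A` is the smallest complete subalgebra of `E` containing `⋃ k, Asub k`
    (A : Set E)
    (hA' : A = ⋂₀ {S : Set E | CompleteSubalgebra S ∧ (⋃ k : K, Asub k) ⊆ S}) :
    -- (a) density: `A` is the direct limit of the `Asub k`
    (∀ a ∈ A, a ≠ ⊥ → ∃ k : K, ∃ b ∈ Asub k, b ≠ ⊥ ∧ b ≤ a) ∧
    -- (b) correctness is preserved
    (∀ k : K, ∀ a ∈ A,
      sInf {e | e ∈ Esub k ∧ a ≤ e} = sInf {b | b ∈ Asub k ∧ a ≤ b}) := by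
  set D := ⋃ k, Asub k
  have hD : ∀ k, ∀ d ∈ D, proj (Esub k) d = proj (Asub k) d := by
    intro k d hd
    obtain ⟨l, hl⟩ := Set.mem_iUnion.1 hd
    obtain ⟨m, hkm, hlm⟩ := hdir k l
    exact hcorrect k m hkm d (hAmono l m hlm hl)
  have hAD : A ⊆ joinsOf D := hA' ▸ Set.sInter_subset_of_mem
    ⟨completeSubalgebra_joinsOf hE hA (Set.subset_iUnion Asub) hEdense hD, subset_joinsOf⟩
  refine ⟨fun a ha hne => ?_, fun k a ha => proj_eq_of_mem_joinsOf (hE k) (hA k) (hD k) (hAD ha)⟩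
  obtain ⟨d, hd, hdne, hda⟩ := exists_ne_bot_le_of_mem_joinsOf (hAD ha) hne
  obtain ⟨k, hk⟩ := Set.mem_iUnion.1 hd
  exact ⟨k, d, hk, hdne, hda⟩

/-- Embeddability of direct limits, with preservation of correctness. -/
theorem direct_limit_embeds {E : Type*} [CompleteBooleanAlgebra E]
    {K : Type*} [PartialOrder K]
    (hdir : ∀ k l : K, ∃ m : K, k ≤ m ∧ l ≤ m)
    (Asub Esub : K → Set E)
    (hA : ∀ k, CompleteSubalgebra (Asub k)) (hE : ∀ k, CompleteSubalgebra (Esub k))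
    (hAE : ∀ k, Asub k ⊆ Esub k)
    (hAmono : ∀ k l : K, k ≤ l → Asub k ⊆ Asub l)
    (hEmono : ∀ k l : K, k ≤ l → Esub k ⊆ Esub l)
    (hEdense : ∀ e : E, e ≠ ⊥ → ∃ k : K, ∃ e' ∈ Esub k, e' ≠ ⊥ ∧ e' ≤ e)
    (hcorrect : ∀ k l : K, k ≤ l → ∀ a ∈ Asub l,
      sInf {e | e ∈ Esub k ∧ a ≤ e} = sInf {b | b ∈ Asub k ∧ a ≤ b})
    -- `A` is the smallest complete subalgebra of `E` containing `⋃ k, Asub k`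
    (A : Set E)
    (hA' : A = ⋂₀ {S : Set E | CompleteSubalgebra S ∧ (⋃ k : K, Asub k) ⊆ S}) :
    -- (a) density: `A` is the direct limit of the `Asub k`
    (∀ a ∈ A, a ≠ ⊥ → ∃ k : K, ∃ b ∈ Asub k, b ≠ ⊥ ∧ b ≤ a) ∧
    -- (b) correctness is preserved
    (∀ k : K, ∀ a ∈ A,
      sInf {e | e ∈ Esub k ∧ a ≤ e} = sInf {b | b ∈ Asub k ∧ a ≤ b}) :=
  direct_limit_embeds_general hdir Asub Esub hA hE hAmono hEdense hcorrect A hA'
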